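/- arXiv:1507.07119 — 2 statements merged into one kernel-verified Lean document; each statement's English description precedes it below -/
import Mathlib

section
/- Let θ = (θ₁,…,θₙ) ∈ ℝⁿ be such that 1, θ₁, …, θₙ are linearly independent over ℤ, and let m, m′ be best approximations to θ (with respect to the weights j₁,…,jₙ) with M_m < M_{m′} such that no best approximation m″ to θ satisfies M_m < M_{m″} < M_{m′}. Then there is no (v₀, v₁, …, vₙ) ∈ ℤ^{n+1} ∖ {0} with max_{1≤i≤n} |vᵢ|^{1/jᵢ} < M_{m′} and |v₀ + v₁θ₁ + ⋯ + vₙθₙ| < ‖m·θ‖. -/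
open scoped BigOperators

/-- Distance from a real number to the nearest integer. -/
noncomputable def nearInt (x : ℝ) : ℝ := |x - round x|

/-- The height `M_m = max_i |m_i|^(1/j_i)` of an integer vector. -/
noncomputable def height (n : ℕ) (j : Fin n → ℝ) (m : Fin n → ℤ) : ℝ :=
  ⨆ i, (|m i| : ℝ) ^ (1 / j i)

/-- `m ∈ ℤⁿ \ {0}` is a best approximation to `θ` with respect to the weights `j`. -/
def IsBestApprox (n : ℕ) (j θ : Fin n → ℝ) (m : Fin n → ℤ) : Prop :=
  m ≠ 0 ∧ ∀ v : Fin n → ℤ, v ≠ 0 → v ≠ m → v ≠ -m →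
    height n j v ≤ height n j m →
    nearInt (∑ i, (m i : ℝ) * θ i) < nearInt (∑ i, (v i : ℝ) * θ i)

/-- `1, θ₁, …, θₙ` are linearly independent over `ℤ`. -/
def ZLinIndep (n : ℕ) (θ : Fin n → ℝ) : Prop :=
  ∀ (a₀ : ℤ) (a : Fin n → ℤ), (a₀ : ℝ) + ∑ i, (a i : ℝ) * θ i = 0 → a₀ = 0 ∧ a = 0

lemma nearInt_le_abs_sub_int (x : ℝ) (k : ℤ) : nearInt x ≤ |x - k| := round_le x k

lemma nearInt_neg (x : ℝ) : nearInt (-x) = nearInt x := by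
  have h1 : nearInt (-x) ≤ nearInt x := by
    have := round_le (-x) (-(round x))
    calc nearInt (-x) ≤ |(-x) - ((-(round x) : ℤ) : ℝ)| := this
      _ = |x - round x| := by push_cast; rw [show -x - -(round x : ℝ) = -(x - round x) by ring, abs_neg]
  have h2 : nearInt x ≤ nearInt (-x) := by
    have := round_le x (-(round (-x)))
    calc nearInt x ≤ |x - ((-(round (-x)) : ℤ) : ℝ)| := this
      _ = |(-x) - round (-x)| := by push_cast; rw [show x - -(round (-x) : ℝ) = -(-x - round (-x)) by ring, abs_neg]
  linarith

lemma nearInt_eq_cases {a b : ℝ} (h : nearInt a = nearInt b) :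
    (∃ k : ℤ, a - b + k = 0) ∨ (∃ k : ℤ, a + b + k = 0) := by
  rcases abs_eq_abs.mp h with h' | h'
  · left; exact ⟨round b - round a, by push_cast; linarith⟩
  · right; exact ⟨-(round a + round b), by push_cast; linarith⟩

theorem statement7 (n : ℕ) (hn : 1 ≤ n) (θ j : Fin n → ℝ)
    (hj : ∀ i, 0 < j i) (hsum : ∑ i, j i = 1) (hθ : ZLinIndep n θ)
    (m m' : Fin n → ℤ) (hm : IsBestApprox n j θ m) (hm' : IsBestApprox n j θ m')
    (hlt : height n j m < height n j m')
    (hgap : ¬ ∃ m'' : Fin n → ℤ, IsBestApprox n j θ m'' ∧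
      height n j m < height n j m'' ∧ height n j m'' < height n j m') :
    ¬ ∃ (v₀ : ℤ) (v : Fin n → ℤ), ¬(v₀ = 0 ∧ v = 0) ∧
      height n j v < height n j m' ∧
      |(v₀ : ℝ) + ∑ i, (v i : ℝ) * θ i| < nearInt (∑ i, (m i : ℝ) * θ i) := by
  haveI : Nonempty (Fin n) := ⟨⟨0, hn⟩⟩
  set vθ : (Fin n → ℤ) → ℝ := fun w => ∑ i, (w i : ℝ) * θ i with hvθ
  -- vθ of negation
  have hvθneg : ∀ w : Fin n → ℤ, vθ (-w) = -vθ w := by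
    intro w
    simp only [hvθ, Pi.neg_apply, Int.cast_neg, neg_mul, Finset.sum_neg_distrib]
  -- distinctness from linear independence
  have hdist : ∀ w u : Fin n → ℤ, nearInt (vθ w) = nearInt (vθ u) → w = u ∨ w = -u := by
    intro w u h
    rcases nearInt_eq_cases h with ⟨k, hk⟩ | ⟨k, hk⟩
    · left
      have hsub : (k : ℝ) + ∑ i, ((w i - u i : ℤ) : ℝ) * θ i = 0 := by
        push_cast
        simp only [sub_mul, Finset.sum_sub_distrib]
        simp only [hvθ] at hk; linarith
      have := (hθ k (w - u) (by simpa using hsub)).2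
      funext i
      have := congrFun this i
      simp only [Pi.sub_apply, Pi.zero_apply, sub_eq_zero] at this
      exact this
    · right
      have hsub : (k : ℝ) + ∑ i, ((w i + u i : ℤ) : ℝ) * θ i = 0 := by
        push_cast
        simp only [add_mul, Finset.sum_add_distrib]
        simp only [hvθ] at hk; linarith
      have := (hθ k (w + u) (by simpa using hsub)).2
      funext i
      have := congrFun this i
      simp only [Pi.add_apply, Pi.zero_apply, add_eq_zero_iff_eq_neg] at this
      simpa using this
  rintro ⟨v₀, v, hv0, hvh, hvlt⟩
  by_cases hv : v = 0
  · -- then v₀ ≠ 0 and |v₀| < nearInt ≤ 1/2 : contradiction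
    have hv₀ : v₀ ≠ 0 := fun h => hv0 ⟨h, hv⟩
    have h1 : (1 : ℝ) ≤ |(v₀ : ℝ)| := by
      rw [← Int.cast_abs]
      exact_mod_cast Int.one_le_abs hv₀
    have h2 : nearInt (∑ i, (m i : ℝ) * θ i) ≤ 1 / 2 := abs_sub_round _
    have h3 : |(v₀ : ℝ) + ∑ i, (v i : ℝ) * θ i| = |(v₀ : ℝ)| := by
      subst hv; simp
    rw [h3] at hvlt
    linarith
  -- main case: v ≠ 0
  have hkey : nearInt (vθ v) < nearInt (vθ m) := by
    have h1 : nearInt (vθ v) ≤ |(v₀ : ℝ) + ∑ i, (v i : ℝ) * θ i| := by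
      have := nearInt_le_abs_sub_int (vθ v) (-v₀)
      calc nearInt (vθ v) ≤ |vθ v - ((-v₀ : ℤ) : ℝ)| := this
        _ = |(v₀ : ℝ) + ∑ i, (v i : ℝ) * θ i| := by push_cast; rw [hvθ]; ring_nf
    exact lt_of_le_of_lt h1 hvlt
  -- the set of nonzero vectors of height ≤ height v is finite and nonempty
  set H := height n j v with hH
  have hheight_le : ∀ (w : Fin n → ℤ) (i : Fin n), (|w i| : ℝ) ^ (1 / j i) ≤ height n j w := by
    intro w i
    rw [height]
    exact le_ciSup (f := fun i => (|w i| : ℝ) ^ (1 / j i)) (Set.Finite.bddAbove (Set.finite_range _)) i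
  have hbound : ∀ w : Fin n → ℤ, height n j w ≤ H → ∀ i, (|w i| : ℝ) ≤ H ^ (j i) := by
    intro w hw i
    have h0 : (0 : ℝ) ≤ (|w i| : ℝ) := by positivity
    have h1 : (|w i| : ℝ) ^ (1 / j i) ≤ H := le_trans (hheight_le w i) hw
    have h2 : ((|w i| : ℝ) ^ (1 / j i)) ^ (j i) ≤ H ^ (j i) :=
      Real.rpow_le_rpow (Real.rpow_nonneg h0 _) h1 (hj i).le
    rwa [← Real.rpow_mul h0, one_div,
      inv_mul_cancel₀ (hj i).ne', Real.rpow_one] at h2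
    -- note: rpow_natCast not needed; handled below
  have hfin : {w : Fin n → ℤ | w ≠ 0 ∧ height n j w ≤ H}.Finite := by
    apply Set.Finite.subset (Set.Finite.pi (fun i : Fin n => Set.finite_Icc (-⌈H ^ (j i)⌉) ⌈H ^ (j i)⌉))
    intro w hw
    intro i _
    have := hbound w hw.2 i
    have hle : |w i| ≤ ⌈H ^ (j i)⌉ := by
      have : (|w i| : ℝ) ≤ (⌈H ^ (j i)⌉ : ℝ) := le_trans this (Int.le_ceil _)
      exact_mod_cast this
    exact Set.mem_Icc.mpr (abs_le.mp hle)
  have hvmem : v ∈ hfin.toFinset := by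
    rw [Set.Finite.mem_toFinset]; exact ⟨hv, le_refl _⟩
  obtain ⟨w₀, hw₀F, hw₀min⟩ := Finset.exists_min_image hfin.toFinset
    (fun w => nearInt (vθ w)) ⟨v, hvmem⟩
  rw [Set.Finite.mem_toFinset] at hw₀F
  obtain ⟨hw₀0, hw₀H⟩ := hw₀F
  have hw₀v : nearInt (vθ w₀) ≤ nearInt (vθ v) := hw₀min v hvmem
  have hw₀m : nearInt (vθ w₀) < nearInt (vθ m) := lt_of_le_of_lt hw₀v hkey
  -- w₀ is a best approximation
  have hba : IsBestApprox n j θ w₀ := by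
    refine ⟨hw₀0, fun u hu0 hum hunm hule => ?_⟩
    have huH : u ∈ hfin.toFinset := by
      rw [Set.Finite.mem_toFinset]
      exact ⟨hu0, le_trans hule hw₀H⟩
    have h1 : nearInt (vθ w₀) ≤ nearInt (vθ u) := hw₀min u huH
    rcases lt_or_eq_of_le h1 with h | h
    · exact h
    · exfalso
      rcases hdist u w₀ h.symm with h' | h'
      · exact hum h'
      · exact hunm h'
  -- height m < height w₀
  have hmw₀ : height n j m < height n j w₀ := by
    by_contra h
    push_neg at h
    have hne1 : w₀ ≠ m := by
      rintro rfl; exact lt_irrefl _ hw₀m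
    have hne2 : w₀ ≠ -m := by
      rintro rfl
      rw [hvθneg, nearInt_neg] at hw₀m
      exact lt_irrefl _ hw₀m
    have := hm.2 w₀ hw₀0 hne1 hne2 h
    exact absurd hw₀m (not_lt.mpr this.le)
  exact hgap ⟨w₀, hba, hmw₀, lt_of_le_of_lt hw₀H hvh⟩
end

section
/- Let θ = (θ₁,…,θₙ) ∈ ℝⁿ be such that 1, θ₁, …, θₙ are linearly independent over ℤ, and let m₀ be a best approximation to θ (with respect to the weights j₁,…,jₙ). Then the set {m ∈ ℤⁿ : m is a best approximation to θ and M_{m₀} ≤ M_m < 2·M_{m₀}} has at most 4·3ⁿ elements. -/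
open scoped BigOperators

/-!
Label each vector `m` of the window `M₀ ≤ M_m < 2 M₀` by the sign of the rounding error
`e(m) = m·θ - round(m·θ)`, by which of the two buckets `[M₀, 3/2 M₀)`, `[3/2 M₀, 2 M₀)` contains
`M_m`, and, writing `L` for the lower end of that bucket and `R = 3/2 L`, by the third of
`(-R^{jᵢ}, R^{jᵢ})` containing `mᵢ`, for each `i`. There are `2 · 2 · 3ⁿ` labels.

Suppose two best approximations `m ≠ m'` with `M_m ≤ M_{m'}` share a label and put `v = m' - m`.
Then `|vᵢ| ≤ 2/3 R^{jᵢ} ≤ L^{jᵢ}` because `jᵢ ≤ 1`, so `M_v ≤ M_m`; moreover `v ≠ m` since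
`M_{2m} ≥ 2 M_m > M_{m'}`. Hence `‖v·θ‖ > |e(m)|`. On the other hand `e(m)` and `e(m')` have the
same sign and `|e(m')| < |e(m)|`, so `‖v·θ‖ ≤ |e(m') - e(m)| < |e(m)|`. Linear independence of
`1, θ₁, …, θₙ` is what makes `e(m)` nonzero and different from `±1/2`, so that `e(-m) = -e(m)`
and `m' ≠ -m`.
-/

open Finset

noncomputable def intDot {n : ℕ} (m : Fin n → ℤ) (θ : Fin n → ℝ) : ℝ :=
  ∑ i, (m i : ℝ) * θ i

noncomputable def roundErr (x : ℝ) : ℝ := x - round x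

section RoundErr

lemma nearInt_sub_le (x y : ℝ) : nearInt (x - y) ≤ |roundErr x - roundErr y| := by
  have := round_le (x - y) (round x - round y)
  rw [roundErr, roundErr, sub_sub_sub_comm]
  exact_mod_cast this

lemma roundErr_neg {x : ℝ} (hx : |roundErr x| < 1 / 2) : roundErr (-x) = -roundErr x := by
  have hround : round (-roundErr x) = 0 := by
    rw [round_eq_zero_iff, Set.mem_Ico]
    constructor <;> linarith [abs_lt.mp hx]
  have hsplit : -x = -roundErr x + ((-round x : ℤ) : ℝ) := by
    rw [roundErr]; push_cast; ring
  rw [roundErr, hsplit, round_add_intCast, hround, roundErr]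
  push_cast
  ring

lemma abs_sub_lt_of_mul_pos {a b : ℝ} (hab : 0 < a * b) (h : |b| < |a|) : |b - a| < |a| := by
  rcases pos_and_pos_or_neg_and_neg_of_mul_pos hab with ⟨ha, hb⟩ | ⟨ha, hb⟩
  · rw [abs_of_pos ha, abs_of_pos hb] at h
    rw [abs_of_pos ha, abs_lt]
    constructor <;> linarith
  · rw [abs_of_neg ha, abs_of_neg hb] at h
    rw [abs_of_neg ha, abs_lt]
    constructor <;> linarith

end RoundErr

section IntDot

variable {n : ℕ} {θ : Fin n → ℝ}

lemma intDot_smul (c : ℤ) (m : Fin n → ℤ) : intDot (c • m) θ = c * intDot m θ := by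
  simp only [intDot, Pi.smul_apply, smul_eq_mul, Int.cast_mul, mul_sum, mul_assoc]

lemma intDot_sub (m m' : Fin n → ℤ) : intDot (m' - m) θ = intDot m' θ - intDot m θ := by
  simp only [intDot, Pi.sub_apply, Int.cast_sub, sub_mul, sum_sub_distrib]

lemma intDot_neg (m : Fin n → ℤ) : intDot (-m) θ = -intDot m θ := by
  simp only [intDot, Pi.neg_apply, Int.cast_neg, neg_mul, sum_neg_distrib]

lemma ZLinIndep.intCast_mul_intDot_ne_intCast (hθ : ZLinIndep n θ) {m : Fin n → ℤ}
    (hm : m ≠ 0) {c : ℤ} (hc : c ≠ 0) (k : ℤ) : c * intDot m θ ≠ k := by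
  intro h
  have hzero : ((-k : ℤ) : ℝ) + intDot (c • m) θ = 0 := by
    rw [intDot_smul, h]; push_cast; ring
  exact hm ((smul_eq_zero.mp (hθ _ _ hzero).2).resolve_left hc)

lemma ZLinIndep.roundErr_intDot_ne_zero (hθ : ZLinIndep n θ) {m : Fin n → ℤ} (hm : m ≠ 0) :
    roundErr (intDot m θ) ≠ 0 := by
  intro h
  refine hθ.intCast_mul_intDot_ne_intCast hm one_ne_zero (round (intDot m θ)) ?_
  rw [roundErr, sub_eq_zero] at h
  simpa using h

lemma ZLinIndep.abs_roundErr_intDot_lt_half (hθ : ZLinIndep n θ) {m : Fin n → ℤ}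
    (hm : m ≠ 0) : |roundErr (intDot m θ)| < 1 / 2 := by
  refine (abs_sub_round _).lt_of_ne fun h => ?_
  rcases abs_eq (by norm_num : (0 : ℝ) ≤ 1 / 2) |>.mp h with h | h
  · exact hθ.intCast_mul_intDot_ne_intCast hm two_ne_zero (2 * round (intDot m θ) + 1)
      (by push_cast; linarith)
  · exact hθ.intCast_mul_intDot_ne_intCast hm two_ne_zero (2 * round (intDot m θ) - 1)
      (by push_cast; linarith)

end IntDot

section Height

variable {n : ℕ} {j : Fin n → ℝ}

lemma height_nonneg (m : Fin n → ℤ) : 0 ≤ height n j m :=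
  Real.iSup_nonneg fun _ => by positivity

lemma rpow_le_height (m : Fin n → ℤ) (i : Fin n) : |(m i : ℝ)| ^ (1 / j i) ≤ height n j m :=
  le_ciSup (f := fun i => |(m i : ℝ)| ^ (1 / j i)) (Set.finite_range _).bddAbove i

lemma height_le_of_abs_le (hj : ∀ i, 0 < j i) {m : Fin n → ℤ} {B : ℝ} (hB : 0 ≤ B)
    (h : ∀ i, |(m i : ℝ)| ≤ B ^ j i) : height n j m ≤ B := by
  refine Real.iSup_le (fun i => ?_) hB
  calc |(m i : ℝ)| ^ (1 / j i) ≤ (B ^ j i) ^ (j i)⁻¹ := by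
        rw [one_div]; exact Real.rpow_le_rpow (abs_nonneg _) (h i) (inv_nonneg.mpr (hj i).le)
    _ = B := Real.rpow_rpow_inv hB (hj i).ne'

lemma abs_lt_rpow_of_height_lt (hj : ∀ i, 0 < j i) {m : Fin n → ℤ} {R : ℝ}
    (h : height n j m < R) (i : Fin n) : |(m i : ℝ)| < R ^ j i := by
  calc |(m i : ℝ)| = (|(m i : ℝ)| ^ (j i)⁻¹) ^ j i :=
        (Real.rpow_inv_rpow (abs_nonneg _) (hj i).ne').symm
    _ < R ^ j i := by
        gcongr
        · exact hj i
        · rw [← one_div]; exact (rpow_le_height m i).trans_lt h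

lemma two_mul_height_le_height_two_smul (hj : ∀ i, 0 < j i) (hj1 : ∀ i, j i ≤ 1)
    (m : Fin n → ℤ) : 2 * height n j m ≤ height n j (2 • m) := by
  suffices height n j m ≤ height n j (2 • m) / 2 by linarith
  refine Real.iSup_le (fun i => ?_) (by linarith [height_nonneg (j := j) (2 • m)])
  have htwo : (2 : ℝ) ≤ 2 ^ (1 / j i) := by
    simpa using Real.rpow_le_rpow_of_exponent_le one_le_two
      ((one_le_div (hj i)).mpr (hj1 i))
  have hscaled :
      |(((2 • m) i : ℤ) : ℝ)| ^ (1 / j i) = 2 ^ (1 / j i) * |(m i : ℝ)| ^ (1 / j i) := by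
    rw [Pi.smul_apply, nsmul_eq_mul, Int.cast_mul, Int.cast_natCast, Nat.cast_ofNat, abs_mul,
      abs_two]
    exact Real.mul_rpow zero_le_two (abs_nonneg _)
  have := rpow_le_height (j := j) (2 • m) i
  rw [hscaled] at this
  rw [le_div_iff₀ two_pos]
  nlinarith [Real.rpow_nonneg (abs_nonneg (m i : ℝ)) (1 / j i)]

end Height

section Thirds

noncomputable def thirdIdx (r x : ℝ) : Fin 3 :=
  if x < -(r / 3) then 0 else if x ≤ r / 3 then 1 else 2

lemma abs_sub_le_of_thirdIdx_eq {r x y : ℝ} (hx : |x| < r) (hy : |y| < r)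
    (h : thirdIdx r x = thirdIdx r y) : |x - y| ≤ 2 / 3 * r := by
  unfold thirdIdx at h
  rcases abs_lt.mp hx with ⟨hx1, hx2⟩
  rcases abs_lt.mp hy with ⟨hy1, hy2⟩
  rw [abs_le]
  split_ifs at h <;> first | exact absurd h (by decide) | constructor <;> linarith

variable {n : ℕ} {j : Fin n → ℝ}

lemma height_sub_le_of_thirdIdx_eq (hj : ∀ i, 0 < j i) (hj1 : ∀ i, j i ≤ 1) {L : ℝ}
    (hL : 0 ≤ L) {m m' : Fin n → ℤ} (hm : height n j m < 3 / 2 * L)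
    (hm' : height n j m' < 3 / 2 * L)
    (h : ∀ i, thirdIdx ((3 / 2 * L) ^ j i) (m i) = thirdIdx ((3 / 2 * L) ^ j i) (m' i)) :
    height n j (m' - m) ≤ L := by
  refine height_le_of_abs_le hj hL fun i => ?_
  have hthreeHalves : (3 / 2 : ℝ) ^ j i ≤ 3 / 2 := by
    simpa using Real.rpow_le_rpow_of_exponent_le (by norm_num : (1 : ℝ) ≤ 3 / 2) (hj1 i)
  calc |(((m' - m) i : ℤ) : ℝ)| = |(m i : ℝ) - m' i| := by
        push_cast [Pi.sub_apply]; rw [abs_sub_comm]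
    _ ≤ 2 / 3 * (3 / 2 * L) ^ j i := abs_sub_le_of_thirdIdx_eq
        (abs_lt_rpow_of_height_lt hj hm i) (abs_lt_rpow_of_height_lt hj hm' i) (h i)
    _ = 2 / 3 * (3 / 2 : ℝ) ^ j i * L ^ j i := by
        rw [Real.mul_rpow (by norm_num) hL, mul_assoc]
    _ ≤ L ^ j i := by nlinarith [Real.rpow_nonneg hL (j i)]

end Thirds

section BestApprox

variable {n : ℕ} {j θ : Fin n → ℝ}

theorem IsBestApprox.eq_of_close (hθ : ZLinIndep n θ) (hj : ∀ i, 0 < j i)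
    (hj1 : ∀ i, j i ≤ 1) {m m' : Fin n → ℤ} (hm : IsBestApprox n j θ m)
    (hm' : IsBestApprox n j θ m') (hle : height n j m ≤ height n j m')
    (hlt : height n j m' < 2 * height n j m) (hclose : height n j (m' - m) ≤ height n j m)
    (hsign : 0 < roundErr (intDot m θ) ↔ 0 < roundErr (intDot m' θ)) : m = m' := by
  by_contra hne
  set e := roundErr (intDot m θ)
  set e' := roundErr (intDot m' θ)
  have hsame : 0 < e * e' := by
    rcases (hθ.roundErr_intDot_ne_zero hm'.1).lt_or_gt with h' | h'
    · refine mul_pos_of_neg_of_neg (lt_of_not_ge fun h => h'.not_gt <| hsign.mp <|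
        h.lt_of_ne (hθ.roundErr_intDot_ne_zero hm.1).symm) h'
    · exact mul_pos (hsign.mpr h') h'
  have hne_neg : m ≠ -m' := by
    rintro rfl
    have : e = -e' := by
      simp only [e, e', intDot_neg, roundErr_neg (hθ.abs_roundErr_intDot_lt_half hm'.1)]
    have : e * e' = -(e' * e') := by rw [this]; ring
    linarith [mul_self_nonneg e']
  have hcloser : |e'| < |e| := hm'.2 m hm.1 hne hne_neg hle
  have hv : m' - m ≠ 0 := sub_ne_zero.mpr (Ne.symm hne)
  have hv_ne : m' - m ≠ m := by
    intro h
    have hdouble : m' = 2 • m := by rw [two_smul, ← sub_eq_iff_eq_add, h]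
    have := two_mul_height_le_height_two_smul hj hj1 m
    rw [← hdouble] at this
    linarith
  have hv_ne_neg : m' - m ≠ -m := fun h => hm'.1 (sub_eq_neg_self.mp h)
  have hbest : |e| < nearInt (intDot (m' - m) θ) := hm.2 _ hv hv_ne hv_ne_neg hclose
  have hsub : nearInt (intDot (m' - m) θ) ≤ |e' - e| := by
    rw [intDot_sub]; exact nearInt_sub_le _ _
  linarith [abs_sub_lt_of_mul_pos hsame hcloser]

noncomputable def bucketFloor (M h : ℝ) : ℝ := if h < 3 / 2 * M then M else 3 / 2 * M

lemma bucketFloor_spec {M h : ℝ} (hM : 0 ≤ M) (hMh : M ≤ h) (h2M : h < 2 * M) :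
    0 ≤ bucketFloor M h ∧ bucketFloor M h ≤ h ∧ h < 3 / 2 * bucketFloor M h := by
  unfold bucketFloor
  split_ifs <;> refine ⟨by positivity, by linarith, by linarith⟩

noncomputable def windowClass (j θ : Fin n → ℝ) (M : ℝ) (m : Fin n → ℤ) :
    Prop × Prop × (Fin n → Fin 3) :=
  (0 < roundErr (intDot m θ), height n j m < 3 / 2 * M,
    fun i => thirdIdx ((3 / 2 * bucketFloor M (height n j m)) ^ j i) (m i))

theorem windowClass_injOn (hθ : ZLinIndep n θ) (hj : ∀ i, 0 < j i) (hj1 : ∀ i, j i ≤ 1)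
    {M : ℝ} (hM : 0 ≤ M) :
    Set.InjOn (windowClass j θ M)
      {m | IsBestApprox n j θ m ∧ M ≤ height n j m ∧ height n j m < 2 * M} := by
  suffices key : ∀ m m', IsBestApprox n j θ m → M ≤ height n j m → height n j m < 2 * M →
      IsBestApprox n j θ m' → M ≤ height n j m' → height n j m' < 2 * M →
      windowClass j θ M m = windowClass j θ M m' → height n j m ≤ height n j m' → m = m' by
    rintro m ⟨hm, hMm, hm2⟩ m' ⟨hm', hMm', hm2'⟩ hcls
    rcases le_total (height n j m) (height n j m') with hle | hle
    · exact key m m' hm hMm hm2 hm' hMm' hm2' hcls hle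
    · exact (key m' m hm' hMm' hm2' hm hMm hm2 hcls.symm hle).symm
  intro m m' hm hMm hm2 hm' hMm' hm2' hcls hle
  simp only [windowClass, Prod.mk.injEq] at hcls
  obtain ⟨hsign, hbucket, hthird⟩ := hcls
  have hL : bucketFloor M (height n j m') = bucketFloor M (height n j m) := by
    simp only [bucketFloor, hbucket]
  obtain ⟨hL0, hLm, hmL⟩ := bucketFloor_spec hM hMm hm2
  obtain ⟨-, -, hm'L⟩ := bucketFloor_spec hM hMm' hm2'
  rw [hL] at hm'L hthird
  have hclose := height_sub_le_of_thirdIdx_eq hj hj1 hL0 hmL hm'L (congrFun hthird)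
  exact hm.eq_of_close hθ hj hj1 hm' hle (by linarith) (hclose.trans hLm) (iff_of_eq hsign)

end BestApprox

theorem statement9_general (n : ℕ) (θ j : Fin n → ℝ)
    (hj : ∀ i, 0 < j i) (hsum : ∑ i, j i = 1) (hθ : ZLinIndep n θ)
    (m₀ : Fin n → ℤ) :
    {m : Fin n → ℤ | IsBestApprox n j θ m ∧
        height n j m₀ ≤ height n j m ∧ height n j m < 2 * height n j m₀}.Finite ∧
      {m : Fin n → ℤ | IsBestApprox n j θ m ∧
        height n j m₀ ≤ height n j m ∧
          height n j m < 2 * height n j m₀}.ncard ≤ 4 * 3 ^ n := by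
  have hj1 : ∀ i, j i ≤ 1 := fun i => hsum ▸ single_le_sum (fun k _ => (hj k).le) (mem_univ i)
  have hinj := windowClass_injOn hθ hj hj1 (height_nonneg (j := j) m₀)
  refine ⟨.of_finite_image (Set.toFinite _) hinj, ?_⟩
  calc _ ≤ (Set.univ : Set (Prop × Prop × (Fin n → Fin 3))).ncard :=
        Set.ncard_le_ncard_of_injOn _ (fun _ _ => Set.mem_univ _) hinj
    _ = 4 * 3 ^ n := by
        rw [Set.ncard_univ, Nat.card_eq_fintype_card]
        simp only [Fintype.card_prod, Fintype.card_prop, Fintype.card_fun, Fintype.card_fin]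
        ring

theorem statement9 (n : ℕ) (hn : 1 ≤ n) (θ j : Fin n → ℝ)
    (hj : ∀ i, 0 < j i) (hsum : ∑ i, j i = 1) (hθ : ZLinIndep n θ)
    (m₀ : Fin n → ℤ) (hm₀ : IsBestApprox n j θ m₀) :
    {m : Fin n → ℤ | IsBestApprox n j θ m ∧
        height n j m₀ ≤ height n j m ∧ height n j m < 2 * height n j m₀}.Finite ∧
      {m : Fin n → ℤ | IsBestApprox n j θ m ∧
        height n j m₀ ≤ height n j m ∧
          height n j m < 2 * height n j m₀}.ncard ≤ 4 * 3 ^ n :=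
  statement9_general n θ j hj hsum hθ m₀
end
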